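/- arXiv:2402.04085 — 5 statements merged into one kernel-verified Lean document; each statement's English description precedes it below -/
import Mathlib

section
/- For every year y ≥ 1, write y = 100c + r where c = ⌊y/100⌋ and r = y mod 100. Let m be a month with 1 ≤ m ≤ 12 and d a day with 1 ≤ d ≤ (length of month m in year y). If it is NOT the case that y is a leap year and m ≤ 2, then the day-of-week code satisfies W(y,m,d) = (d + M(m) + C(c) + Y(r)) mod 7. -/
/-- A Gregorian leap year. -/
def IsLeapYear (y : ℕ) : Prop := y % 4 = 0 ∧ (y % 100 ≠ 0 ∨ y % 400 = 0)

instance : DecidablePred IsLeapYear := fun y =>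
  inferInstanceAs (Decidable (y % 4 = 0 ∧ (y % 100 ≠ 0 ∨ y % 400 = 0)))

/-- Total number of days in the months strictly before month `m`
in an ordinary (non-leap) year. -/
def daysBeforeOrdinary : ℕ → ℕ
  | 1 => 0
  | 2 => 31
  | 3 => 59
  | 4 => 90
  | 5 => 120
  | 6 => 151
  | 7 => 181
  | 8 => 212
  | 9 => 243
  | 10 => 273
  | 11 => 304
  | 12 => 334
  | _ => 0

/-- Number of days in month `m` of year `y`. -/
def monthLength (y m : ℕ) : ℕ :=
  if m = 2 then (if IsLeapYear y then 29 else 28)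
  else if m = 4 ∨ m = 6 ∨ m = 9 ∨ m = 11 then 30 else 31

/-- Number of days in year `y` strictly before month `m`. -/
def daysBeforeMonth (y m : ℕ) : ℕ :=
  if IsLeapYear y ∧ 3 ≤ m then daysBeforeOrdinary m + 1 else daysBeforeOrdinary m

/-- Absolute day number of the date `(y, m, d)`: the number of days from
1 January of year 1 of the proleptic Gregorian calendar up to and including
the given date. -/
def absDayNumber (y m d : ℕ) : ℕ :=
  365 * (y - 1) + (y - 1) / 4 - (y - 1) / 100 + (y - 1) / 400 + daysBeforeMonth y m + d

/-- The day-of-week code of the date `(y, m, d)`: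
0 = Saturday, 1 = Sunday, ..., 6 = Friday. -/
def weekdayCode (y m d : ℕ) : ℕ := (absDayNumber y m d + 1) % 7

/-- The Gauss month code. -/
def gaussM : ℕ → ℕ
  | 1 => 0
  | 2 => 3
  | 3 => 3
  | 4 => 6
  | 5 => 1
  | 6 => 4
  | 7 => 6
  | 8 => 2
  | 9 => 5
  | 10 => 0
  | 11 => 3
  | 12 => 5
  | _ => 0

/-- The Gauss century code. -/
def gaussC (c : ℕ) : ℕ := (2 * (3 - c % 4) + 1) % 7

/-- The Gauss year code. -/
def gaussY (r : ℕ) : ℕ := (r + r / 4) % 7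

/-- Auxiliary key predicate: the Gauss formula for day 0. -/
def GaussK (y m : ℕ) : Prop :=
  (absDayNumber y m 0 + 1) % 7 =
    (gaussM m + gaussC (y / 100) + gaussY (y % 100)) % 7

instance : ∀ y m, Decidable (GaussK y m) := fun y m =>
  inferInstanceAs (Decidable (_ = _))

lemma leap_add (y : ℕ) : IsLeapYear (y + 400) ↔ IsLeapYear y := by
  unfold IsLeapYear; omega

lemma days_add (y m : ℕ) : daysBeforeMonth (y + 400) m = daysBeforeMonth y m := by
  unfold daysBeforeMonth
  simp only [leap_add]

lemma absDay_add400 (y m d : ℕ) (hy : 1 ≤ y) :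
    absDayNumber (y + 400) m d = absDayNumber y m d + 146097 := by
  unfold absDayNumber
  rw [days_add]
  omega

lemma gaussC_add (y : ℕ) : gaussC ((y + 400) / 100) = gaussC (y / 100) := by
  have h4 : (y + 400) / 100 = y / 100 + 4 := by omega
  rw [h4]
  unfold gaussC
  rw [Nat.add_mod_right]

lemma gaussK_step (y m : ℕ) (hy : 1 ≤ y) (h : GaussK y m) : GaussK (y + 400) m := by
  unfold GaussK at h ⊢
  rw [absDay_add400 y m 0 hy, gaussC_add]
  have : (y + 400) % 100 = y % 100 := by omega
  rw [this]
  omega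

set_option maxRecDepth 1000000 in
lemma gaussK_base : ∀ y < 400, ∀ m < 12,
    ¬ (IsLeapYear (y + 1) ∧ m + 1 ≤ 2) → GaussK (y + 1) (m + 1) := by
  simp only [GaussK]
  decide

set_option maxRecDepth 4000 in
lemma gaussK_all : ∀ y, 1 ≤ y → ∀ m, 1 ≤ m → m ≤ 12 →
    ¬ (IsLeapYear y ∧ m ≤ 2) → GaussK y m := by
  intro y
  induction y using Nat.strong_induction_on with
  | h y ih =>
    intro hy m hm1 hm2 h
    by_cases hle : y ≤ 400
    · have hb := gaussK_base (y - 1) (by omega) (m - 1) (by omega)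
      have e1 : y - 1 + 1 = y := by omega
      have e2 : m - 1 + 1 = m := by omega
      rw [e1, e2] at hb
      exact hb h
    · have hrw : y - 400 + 400 = y := by omega
      have hleap := leap_add (y - 400)
      rw [hrw] at hleap
      have hk := ih (y - 400) (by omega) (by omega) m hm1 hm2 (by
        intro ⟨h1, h2⟩; exact h ⟨hleap.mpr h1, h2⟩)
      have := gaussK_step (y - 400) m (by omega) hk
      rwa [hrw] at this

theorem gauss_formula_ordinary (y m d : ℕ) (hy : 1 ≤ y)
    (hm1 : 1 ≤ m) (hm2 : m ≤ 12) (hd1 : 1 ≤ d) (hd2 : d ≤ monthLength y m)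
    (h : ¬ (IsLeapYear y ∧ m ≤ 2)) :
    weekdayCode y m d =
      (d + gaussM m + gaussC (y / 100) + gaussY (y % 100)) % 7 := by
  have hk := gaussK_all y hy m hm1 hm2 h
  unfold GaussK at hk
  have habs : absDayNumber y m d = absDayNumber y m 0 + d := by
    unfold absDayNumber; omega
  unfold weekdayCode
  rw [habs]
  omega
end

section
/- For every year y ≥ 1, write y = 100c + r where c = ⌊y/100⌋ and r = y mod 100. Let m be a month with 1 ≤ m ≤ 12 and d a day with 1 ≤ d ≤ (length of month m in year y). If y is a leap year and m ≤ 2 (i.e., the month is January or February of a leap year), then the day-of-week code satisfies W(y,m,d) = (d + M(m) + C(c) + Y(r) + 6) mod 7, i.e., it equals the Gauss sum d + M(m) + C(c) + Y(r) diminished by 1, taken modulo 7. -/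
set_option maxHeartbeats 2000000 in
theorem gauss_formula_leap_janfeb (y m d : ℕ) (hy : 1 ≤ y)
    (hm1 : 1 ≤ m) (hm2 : m ≤ 12) (hd1 : 1 ≤ d) (hd2 : d ≤ monthLength y m)
    (hleap : IsLeapYear y) (hm : m ≤ 2) :
    weekdayCode y m d =
      (d + gaussM m + gaussC (y / 100) + gaussY (y % 100) + 6) % 7 := by
  obtain ⟨h4, h100⟩ := hleap
  have e4 : (y - 1) / 4 = y / 4 - 1 := by omega
  have e4' : y / 4 = 25 * (y / 100) + (y % 100) / 4 := by omega
  interval_cases m <;>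
  · simp only [weekdayCode, absDayNumber, daysBeforeMonth, daysBeforeOrdinary,
      IsLeapYear, gaussM, gaussC, gaussY]
    norm_num
    rcases h100 with h | h
    · have e100 : (y - 1) / 100 = y / 100 := by omega
      have e400 : (y - 1) / 400 = y / 100 / 4 := by
        rw [Nat.div_div_eq_div_mul]; omega
      omega
    · have e100 : (y - 1) / 100 = y / 100 - 1 := by omega
      have e400 : (y - 1) / 400 = y / 100 / 4 - 1 := by
        rw [Nat.div_div_eq_div_mul]; omega
      omega
end

section
/- For every year y ≥ 1, write y = 100c + r where c = ⌊y/100⌋ and r = y mod 100. Let m be a month with 1 ≤ m ≤ 12 such that it is NOT the case that y is a leap year and m ≤ 2, let w be a weekday code with 0 ≤ w ≤ 6, and let d be a day with 1 ≤ d ≤ (length of month m in year y). Then W(y,m,d) = w if and only if d ≡ w − M(m) − C(c) − Y(r) (mod 7). In particular, the dates in month m of year y falling on the weekday with code w are exactly those d congruent to (w − (M(m) + C(c) + Y(r))) mod 7 modulo 7. -/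
/-!
Since 365 ≡ 1 (mod 7), every year moves the weekday on by one, and every leap day by one more:
the weekday of (y, m, d) is y + (number of leap years up to y) + T(m) + d mod 7, as long as the
leap day of year y falls before the date. With y = 100c + r the leap count y/4 - y/100 + y/400 is
25c + ⌊r/4⌋ - c + ⌊c/4⌋, so y plus it is 124c + ⌊c/4⌋ + r + ⌊r/4⌋ ≡ C(c) + Y(r), and T(m) reduces
to the month code M(m).
-/

def leapYearsUpTo (n : ℕ) : ℕ := n / 4 - n / 100 + n / 400

lemma leapYearsUpTo_succ (n : ℕ) :
    leapYearsUpTo (n + 1) = leapYearsUpTo n + if IsLeapYear (n + 1) then 1 else 0 := by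
  have : n / 100 ≤ n / 4 := Nat.div_le_div_left (by norm_num) (by norm_num)
  simp only [leapYearsUpTo, Nat.succ_div, Nat.dvd_iff_mod_eq_zero]
  split_ifs <;> simp only [IsLeapYear] at * <;> omega

lemma daysBeforeMonth_eq {y m : ℕ} (h : ¬ (IsLeapYear y ∧ m ≤ 2)) :
    daysBeforeMonth y m = daysBeforeOrdinary m + if IsLeapYear y then 1 else 0 := by
  unfold daysBeforeMonth
  split_ifs <;> grind

lemma absDayNumber_eq {y m : ℕ} (d : ℕ) (hy : 1 ≤ y) (h : ¬ (IsLeapYear y ∧ m ≤ 2)) :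
    absDayNumber y m d = 365 * (y - 1) + leapYearsUpTo y + daysBeforeOrdinary m + d := by
  obtain ⟨n, rfl⟩ := Nat.exists_eq_add_of_le' hy
  have : n / 100 ≤ n / 4 := Nat.div_le_div_left (by norm_num) (by norm_num)
  rw [absDayNumber, daysBeforeMonth_eq h, leapYearsUpTo_succ, leapYearsUpTo]
  omega

lemma daysBeforeOrdinary_mod_seven (m : ℕ) : daysBeforeOrdinary m % 7 = gaussM m := by
  unfold daysBeforeOrdinary
  split <;> simp_all [gaussM]

lemma gaussC_modEq (c : ℕ) : gaussC c ≡ 5 * c + c / 4 [MOD 7] := by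
  unfold gaussC Nat.ModEq
  omega

lemma add_leapYearsUpTo_modEq (y : ℕ) :
    y + leapYearsUpTo y ≡ gaussC (y / 100) + gaussY (y % 100) [MOD 7] := by
  have hC := gaussC_modEq (y / 100)
  have h4 : y / 4 = 25 * (y / 100) + y % 100 / 4 := by omega
  have h400 : y / 400 = y / 100 / 4 := by omega
  have hy : y = 100 * (y / 100) + y % 100 := (Nat.div_add_mod y 100).symm
  unfold leapYearsUpTo gaussY Nat.ModEq at *
  generalize y / 100 = c at *
  generalize y % 100 = r at *
  subst hy
  omega

lemma weekdayCode_eq_gauss {y m : ℕ} (d : ℕ) (hy : 1 ≤ y) (h : ¬ (IsLeapYear y ∧ m ≤ 2)) :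
    weekdayCode y m d = (d + (gaussM m + gaussC (y / 100) + gaussY (y % 100))) % 7 := by
  have hm := daysBeforeOrdinary_mod_seven m
  have hy' := add_leapYearsUpTo_modEq y
  unfold weekdayCode Nat.ModEq at *
  rw [absDayNumber_eq d hy h]
  omega

lemma Nat.add_mod_eq_iff_intModEq_sub {n a b w : ℕ} (hw : w < n) :
    (a + b) % n = w ↔ (a : ℤ) ≡ w - b [ZMOD n] := by
  rw [← Nat.mod_eq_of_lt hw, ← Nat.ModEq, ← Int.natCast_modEq_iff, Nat.cast_add,
    Nat.mod_eq_of_lt hw]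
  exact ⟨fun h => by simpa using h.sub_right b, fun h => by simpa using h.add_right b⟩

theorem dates_of_weekday_ordinary_general (y m w d : ℕ) (hy : 1 ≤ y)
    (h : ¬ (IsLeapYear y ∧ m ≤ 2))
    (hw : w ≤ 6) :
    weekdayCode y m d = w ↔
      (d : ℤ) ≡ (w : ℤ) - gaussM m - gaussC (y / 100) - gaussY (y % 100) [ZMOD 7] := by
  rw [weekdayCode_eq_gauss d hy h, Nat.add_mod_eq_iff_intModEq_sub (by omega : w < 7)]
  push_cast
  simp only [sub_add_eq_sub_sub]

theorem dates_of_weekday_ordinary (y m w d : ℕ) (hy : 1 ≤ y)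
    (hm1 : 1 ≤ m) (hm2 : m ≤ 12) (h : ¬ (IsLeapYear y ∧ m ≤ 2))
    (hw : w ≤ 6) (hd1 : 1 ≤ d) (hd2 : d ≤ monthLength y m) :
    weekdayCode y m d = w ↔
      (d : ℤ) ≡ (w : ℤ) - gaussM m - gaussC (y / 100) - gaussY (y % 100) [ZMOD 7] :=
  dates_of_weekday_ordinary_general y m w d hy h hw
end

section
/- For every year y ≥ 1, write y = 100c + r where c = ⌊y/100⌋ and r = y mod 100. Suppose y is a leap year and m ≤ 2 (i.e., the month is January or February of a leap year), let w be a weekday code with 0 ≤ w ≤ 6, and let d be a day with 1 ≤ d ≤ (length of month m in year y). Then W(y,m,d) = w if and only if d ≡ w − M(m) − C(c) − Y(r) + 1 (mod 7). In particular, the dates in month m of year y falling on the weekday with code w are exactly those d congruent to (w − (M(m) + C(c) + Y(r)) + 1) mod 7 modulo 7. -/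
set_option maxRecDepth 40000 in
lemma gauss_key : ∀ b < 400, (b+1) % 4 = 0 → ((b+1) % 100 ≠ 0 ∨ (b+1) % 400 = 0) →
    (b + b/4 - b/100 + 2) % 7 = (gaussC ((b+1)/100) + gaussY ((b+1)%100)) % 7 := by decide

theorem dates_of_weekday_leap_janfeb (y m w d : ℕ) (hy : 1 ≤ y)
    (hleap : IsLeapYear y) (hm : m ≤ 2)
    (hw : w ≤ 6) (hd1 : 1 ≤ d) (hd2 : d ≤ monthLength y m) :
    weekdayCode y m d = w ↔
      (d : ℤ) ≡ (w : ℤ) - gaussM m - gaussC (y / 100) - gaussY (y % 100) + 1 [ZMOD 7] := by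
  obtain ⟨h4, h100⟩ := hleap
  set b := (y-1) % 400 with hb
  have hblt : b < 400 := Nat.mod_lt _ (by norm_num)
  have hb4 : (b+1) % 4 = 0 := by omega
  have hb100 : (b+1) % 100 ≠ 0 ∨ (b+1) % 400 = 0 := by omega
  have hkey := gauss_key b hblt hb4 hb100
  have hC : gaussC (y/100) = gaussC ((b+1)/100) := by
    unfold gaussC
    have : (y/100) % 4 = ((b+1)/100) % 4 := by omega
    rw [this]
  have hY : y % 100 = (b+1) % 100 := by omega
  rw [hC, hY] at *
  have hD : daysBeforeMonth y m % 7 = gaussM m % 7 := by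
    have hnot : ¬ (IsLeapYear y ∧ 3 ≤ m) := fun h => by omega
    unfold daysBeforeMonth
    rw [if_neg hnot]
    interval_cases m <;> rfl
  have habs : absDayNumber y m d =
      146097 * ((y-1)/400) + 364 * b + (b + b/4 - b/100 + daysBeforeMonth y m + d) := by
    unfold absDayNumber; omega
  have hW : weekdayCode y m d = (b + b/4 - b/100 + daysBeforeMonth y m + d + 1) % 7 := by
    unfold weekdayCode; omega
  have hgC : gaussC ((b+1)/100) ≤ 6 := Nat.lt_succ_iff.mp (Nat.mod_lt _ (by norm_num))
  have hgY : gaussY ((b+1)%100) ≤ 6 := Nat.lt_succ_iff.mp (Nat.mod_lt _ (by norm_num))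
  have hgM : gaussM m ≤ 6 := by interval_cases m <;> decide
  unfold Int.ModEq
  omega
end

section
/- Let y ≥ 1 be a year with 1 ≤ y mod 100 ≤ 71. Then y + 28 is a leap year if and only if y is a leap year, and for every month m with 1 ≤ m ≤ 12 and every day d with 1 ≤ d ≤ (length of month m in year y), the day-of-week codes satisfy W(y+28, m, d) = W(y, m, d). In other words, away from the problematic century boundaries the Gregorian calendar of a year repeats itself entirely after 28 years. -/
theorem gregorian_period_28 (y : ℕ) (hy : 1 ≤ y)
    (h1 : 1 ≤ y % 100) (h2 : y % 100 ≤ 71) :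
    (IsLeapYear (y + 28) ↔ IsLeapYear y) ∧
    ∀ m d : ℕ, 1 ≤ m → m ≤ 12 → 1 ≤ d → d ≤ monthLength y m →
      weekdayCode (y + 28) m d = weekdayCode y m d := by
  have hl : IsLeapYear (y + 28) ↔ IsLeapYear y := by
    unfold IsLeapYear
    constructor
    · rintro ⟨h4, -⟩; exact ⟨by omega, Or.inl (by omega)⟩
    · rintro ⟨h4, -⟩; exact ⟨by omega, Or.inl (by omega)⟩
  refine ⟨hl, ?_⟩
  intro m d _ _ _ _
  have hD : daysBeforeMonth (y + 28) m = daysBeforeMonth y m := by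
    unfold daysBeforeMonth
    simp only [hl]
  unfold weekdayCode absDayNumber
  rw [hD]
  have e1 : y + 28 - 1 = (y - 1) + 28 := by omega
  rw [e1]
  have h4 : ((y-1)+28)/4 = (y-1)/4 + 7 := by omega
  have h100 : ((y-1)+28)/100 = (y-1)/100 := by omega
  have h400 : ((y-1)+28)/400 = (y-1)/400 := by omega
  omega
end
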